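/- Let X be a real normed vector space, K ⊂ X a non-zero wedge, and 𝒜 a nonempty set of homogeneous, bounded maps on K. The discrete inclusion DI(𝒜) is selectably stable (i.e. there is a sequence d = (f₁, f₂, …) in 𝒜 with lim_{m→∞} ‖f_m ∘ ⋯ ∘ f₁‖ = 0) if and only if r_*(𝒜) < 1. -/

import Mathlib

open Filter Topology Set

noncomputable section

/-- A wedge in a real normed space: a convex set closed under positive scalar multiplication. -/
def IsWedge {X : Type*} [NormedAddCommGroup X] [NormedSpace ℝ X] (W : Set X) : Prop :=
  Convex ℝ W ∧ ∀ c : ℝ, 0 < c → ∀ x ∈ W, c • x ∈ W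

/-- A closed cone: closed, convex, closed under positive scalar multiplication, K ∩ (−K) = {0}. -/
def IsClosedCone {X : Type*} [NormedAddCommGroup X] [NormedSpace ℝ X] (K : Set X) : Prop :=
  IsClosed K ∧ Convex ℝ K ∧ (∀ c : ℝ, 0 < c → ∀ x ∈ K, c • x ∈ K) ∧ K ∩ (-K) = {0}

/-- A polyhedral cone: intersection of finitely many closed halfspaces through the origin. -/
def IsPolyhedralCone {X : Type*} [NormedAddCommGroup X] [NormedSpace ℝ X] (K : Set X) : Prop :=
  ∃ (k : ℕ) (φ : Fin k → (X →ₗ[ℝ] ℝ)), K = {x | ∀ i, 0 ≤ φ i x}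

/-- `f` maps `W` into itself and is positively homogeneous on `W`. -/
def HomogOn {X : Type*} [NormedAddCommGroup X] [NormedSpace ℝ X] (f : X → X) (W : Set X) : Prop :=
  Set.MapsTo f W W ∧ ∀ c : ℝ, 0 < c → ∀ x ∈ W, f (c • x) = c • f x

/-- `f` is order-preserving with respect to the order induced by the cone `K`. -/
def OrderPresOn {X : Type*} [NormedAddCommGroup X] [NormedSpace ℝ X] (f : X → X) (K : Set X) : Prop :=
  ∀ x ∈ K, ∀ y ∈ K, y - x ∈ K → f y - f x ∈ K

/-- `f` is subadditive on `K`: f(x+y) ≤ f(x)+f(y) in the cone order. -/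
def SubaddOn {X : Type*} [NormedAddCommGroup X] [NormedSpace ℝ X] (f : X → X) (K : Set X) : Prop :=
  ∀ x ∈ K, ∀ y ∈ K, (f x + f y) - f (x + y) ∈ K

/-- The norm of a homogeneous map on `W`: sup of ‖f x‖ over unit vectors of `W`. -/
def opNormW {X : Type*} [NormedAddCommGroup X] (f : X → X) (W : Set X) : ℝ :=
  sSup ((fun x => ‖f x‖) '' {x ∈ W | ‖x‖ = 1})

/-- A bounded homogeneous map on `W`. -/
def BoundedMapOn {X : Type*} [NormedAddCommGroup X] (f : X → X) (W : Set X) : Prop :=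
  ∃ C : ℝ, ∀ x ∈ W, ‖f x‖ ≤ C * ‖x‖

/-- A bounded family of homogeneous maps on `W`. -/
def BoundedFamOn {X : Type*} [NormedAddCommGroup X] (A : Set (X → X)) (W : Set X) : Prop :=
  ∃ C : ℝ, ∀ f ∈ A, ∀ x ∈ W, ‖f x‖ ≤ C * ‖x‖

/-- `famPow A m` = 𝒜^m, the set of m-fold compositions of maps from `A` (with 𝒜^0 = {id}). -/
def famPow {X : Type*} (A : Set (X → X)) : ℕ → Set (X → X)
  | 0 => {id}
  | m + 1 => {h | ∃ f ∈ A, ∃ g ∈ famPow A m, h = f ∘ g}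

/-- The composition of two families of maps. -/
def compFam {X : Type*} (A B : Set (X → X)) : Set (X → X) :=
  {h | ∃ f ∈ A, ∃ g ∈ B, h = f ∘ g}

/-- The Bonsall cone spectral radius r(f) = inf_{n>0} ‖f^n‖^{1/n}. -/
def coneSpecRad {X : Type*} [NormedAddCommGroup X] (f : X → X) (W : Set X) : ℝ :=
  ⨅ n : ℕ+, (opNormW (f^[(n : ℕ)]) W) ^ (((n : ℕ) : ℝ)⁻¹)

/-- sup_{f ∈ 𝒜^m} ‖f‖^{1/m}. -/
def jointTerm {X : Type*} [NormedAddCommGroup X] (A : Set (X → X)) (W : Set X) (m : ℕ) : ℝ :=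
  sSup ((fun f => (opNormW f W) ^ ((m : ℝ)⁻¹)) '' famPow A m)

/-- sup_{f ∈ 𝒜^m} r(f)^{1/m}. -/
def genTerm {X : Type*} [NormedAddCommGroup X] (A : Set (X → X)) (W : Set X) (m : ℕ) : ℝ :=
  sSup ((fun f => (coneSpecRad f W) ^ ((m : ℝ)⁻¹)) '' famPow A m)

/-- The joint spectral radius r̂(𝒜) = inf_{m>0} sup_{f ∈ 𝒜^m} ‖f‖^{1/m}. -/
def jointRad {X : Type*} [NormedAddCommGroup X] (A : Set (X → X)) (W : Set X) : ℝ :=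
  ⨅ m : ℕ+, jointTerm A W (m : ℕ)

/-- The generalized spectral radius r(𝒜) = sup_{m>0} sup_{f ∈ 𝒜^m} r(f)^{1/m}. -/
def genRad {X : Type*} [NormedAddCommGroup X] (A : Set (X → X)) (W : Set X) : ℝ :=
  ⨆ m : ℕ+, genTerm A W (m : ℕ)

/-- β_m = inf_{f ∈ 𝒜^m} ‖f‖. -/
def subBeta {X : Type*} [NormedAddCommGroup X] (A : Set (X → X)) (W : Set X) (m : ℕ) : ℝ :=
  sInf ((fun f => opNormW f W) '' famPow A m)

/-- γ_m = inf_{f ∈ 𝒜^m} r(f). -/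
def subGamma {X : Type*} [NormedAddCommGroup X] (A : Set (X → X)) (W : Set X) (m : ℕ) : ℝ :=
  sInf ((fun f => coneSpecRad f W) '' famPow A m)

/-- F_m^d = f_m ∘ ⋯ ∘ f_1 for a sequence d of maps. -/
def seqComp {X : Type*} (d : ℕ → X → X) : ℕ → X → X
  | 0 => id
  | m + 1 => d m ∘ seqComp d m

/-- The standard cone ℝⁿ_{≥0}. -/
def stdCone (n : ℕ) : Set (Fin n → ℝ) := {x | ∀ i, 0 ≤ x i}

/-- The closed face F_J of the standard cone. -/
def stdFace {n : ℕ} (J : Set (Fin n)) : Set (Fin n → ℝ) :=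
  {x | (∀ i, 0 ≤ x i) ∧ ∀ i ∉ J, x i = 0}

/-- A family of maps on ℝⁿ_{≥0} is irreducible if no non-trivial closed face is invariant
under every member of the family. -/
def IrreducibleFam {n : ℕ} (A : Set ((Fin n → ℝ) → Fin n → ℝ)) : Prop :=
  ¬ ∃ J : Set (Fin n), J.Nonempty ∧ J ≠ Set.univ ∧ ∀ f ∈ A, Set.MapsTo f (stdFace J) (stdFace J)

/-!
If some composition `g = f_m ∘ ⋯ ∘ f_1` of maps from `𝒜` has `‖g‖ < 1`, repeating the word
periodically gives `‖F_{km+j}‖ ≤ ‖F_j‖ ‖g‖^k`, by submultiplicativity of the norm of homogeneous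
maps, and this tends to `0`. Conversely, if `‖F_m‖ → 0` along some sequence, then `β_m < 1` for
some `m > 0`, hence `β_m^{1/m} < 1`.
-/

section

variable {X : Type*}

lemma seqComp_congr {d d' : ℕ → X → X} {n : ℕ} (h : ∀ i < n, d i = d' i) :
    seqComp d n = seqComp d' n := by
  induction n with
  | zero => rfl
  | succ n ih =>
    exact congrArg₂ (· ∘ ·) (h n n.lt_succ_self) (ih fun i hi => h i (hi.trans n.lt_succ_self))

lemma seqComp_add (d : ℕ → X → X) (n j : ℕ) :
    seqComp d (n + j) = seqComp (fun i => d (n + i)) j ∘ seqComp d n := by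
  induction j with
  | zero => rfl
  | succ j ih => exact congrArg (d (n + j) ∘ ·) ih

lemma seqComp_mod_mul_add (d : ℕ → X → X) {m j : ℕ} (k : ℕ) (hj : j ≤ m) :
    seqComp (fun i => d (i % m)) (m * k + j) =
      seqComp d j ∘ seqComp (fun i => d (i % m)) (m * k) := by
  rw [seqComp_add]
  congr 1
  refine seqComp_congr fun i hi => ?_
  simp only [Nat.mul_add_mod, Nat.mod_eq_of_lt (hi.trans_le hj)]

lemma seqComp_mod_mul (d : ℕ → X → X) (m k : ℕ) :
    seqComp (fun i => d (i % m)) (m * k) = (seqComp d m)^[k] := by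
  induction k with
  | zero => rfl
  | succ k ih => rw [Nat.mul_succ, seqComp_mod_mul_add d k le_rfl, ih, Function.iterate_succ']

lemma famPow_nonempty {A : Set (X → X)} (hA : A.Nonempty) (m : ℕ) : (famPow A m).Nonempty := by
  induction m with
  | zero => exact ⟨id, rfl⟩
  | succ m ih =>
    obtain ⟨f, hf⟩ := hA
    obtain ⟨g, hg⟩ := ih
    exact ⟨f ∘ g, f, hf, g, hg, rfl⟩

lemma seqComp_mem_famPow {A : Set (X → X)} {d : ℕ → X → X} (hd : ∀ i, d i ∈ A) (m : ℕ) :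
    seqComp d m ∈ famPow A m := by
  induction m with
  | zero => rfl
  | succ m ih => exact ⟨d m, hd m, seqComp d m, ih, rfl⟩

lemma exists_seqComp_eq_of_mem_famPow {A : Set (X → X)} (hA : A.Nonempty) {m : ℕ} {g : X → X}
    (hg : g ∈ famPow A m) : ∃ d : ℕ → X → X, (∀ i, d i ∈ A) ∧ seqComp d m = g := by
  induction m generalizing g with
  | zero =>
    obtain ⟨f, hf⟩ := hA
    exact ⟨fun _ => f, fun _ => hf, hg.symm⟩
  | succ m ih =>
    obtain ⟨f, hf, g', hg', rfl⟩ := hg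
    obtain ⟨d, hdA, rfl⟩ := ih hg'
    refine ⟨Function.update d m f, fun i => ?_, ?_⟩
    · rcases eq_or_ne i m with rfl | hi
      · simpa using hf
      · simpa [hi] using hdA i
    · show Function.update d m f m ∘ seqComp (Function.update d m f) m = f ∘ seqComp d m
      rw [Function.update_self, seqComp_congr fun i hi => Function.update_of_ne hi.ne f d]

end

lemma iInf_rpow_inv_lt_one_iff {b : ℕ+ → ℝ} (hb : ∀ m, 0 ≤ b m) :
    (⨅ m : ℕ+, b m ^ ((m : ℕ) : ℝ)⁻¹) < 1 ↔ ∃ m, b m < 1 := by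
  have hpos (m : ℕ+) : (0 : ℝ) < ((m : ℕ) : ℝ)⁻¹ := by positivity
  constructor
  · intro h
    obtain ⟨m, hm⟩ := exists_lt_of_ciInf_lt h
    exact ⟨m, not_le.mp fun h1 => hm.not_ge (Real.one_le_rpow h1 (hpos m).le)⟩
  · rintro ⟨m, hm⟩
    have hbdd : BddBelow (range fun m : ℕ+ => b m ^ ((m : ℕ) : ℝ)⁻¹) :=
      ⟨0, by rintro _ ⟨k, rfl⟩; exact Real.rpow_nonneg (hb k) _⟩
    exact (ciInf_le hbdd m).trans_lt (Real.rpow_lt_one (hb m) hm (hpos m))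

section

variable {X : Type*} [NormedAddCommGroup X] {W : Set X} {A : Set (X → X)} {f : X → X}

lemma opNormW_nonneg (f : X → X) (W : Set X) : 0 ≤ opNormW f W :=
  Real.sSup_nonneg <| by rintro _ ⟨x, -, rfl⟩; exact norm_nonneg _

lemma opNormW_le {C : ℝ} (hC : 0 ≤ C) (h : ∀ x ∈ W, ‖x‖ = 1 → ‖f x‖ ≤ C) :
    opNormW f W ≤ C :=
  Real.sSup_le (by rintro _ ⟨x, ⟨hx, hx1⟩, rfl⟩; exact h x hx hx1) hC

lemma opNormW_id_le : opNormW (id : X → X) W ≤ 1 :=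
  opNormW_le zero_le_one fun x _ hx1 => by simp [hx1]

lemma subBeta_nonneg (m : ℕ) : 0 ≤ subBeta A W m :=
  Real.sInf_nonneg <| by rintro _ ⟨g, -, rfl⟩; exact opNormW_nonneg g W

lemma subBeta_le_opNormW {m : ℕ} {g : X → X} (hg : g ∈ famPow A m) :
    subBeta A W m ≤ opNormW g W :=
  csInf_le ⟨0, by rintro _ ⟨g, -, rfl⟩; exact opNormW_nonneg g W⟩ ⟨g, hg, rfl⟩

lemma exists_opNormW_lt_of_subBeta_lt (hA : A.Nonempty) {m : ℕ} {c : ℝ}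
    (h : subBeta A W m < c) : ∃ g ∈ famPow A m, opNormW g W < c := by
  obtain ⟨_, ⟨g, hg, rfl⟩, hgc⟩ := exists_lt_of_csInf_lt ((famPow_nonempty hA m).image _) h
  exact ⟨g, hg, hgc⟩

end

section

variable {X : Type*} [NormedAddCommGroup X] [NormedSpace ℝ X] {W : Set X} {f g : X → X}

def HomogBoundedOn (f : X → X) (W : Set X) : Prop := HomogOn f W ∧ BoundedMapOn f W

lemma norm_le_opNormW_mul (hW : ∀ c : ℝ, 0 < c → ∀ x ∈ W, c • x ∈ W)
    (hf : HomogBoundedOn f W) {x : X} (hx : x ∈ W) : ‖f x‖ ≤ opNormW f W * ‖x‖ := by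
  obtain ⟨C, hC⟩ := hf.2
  rcases eq_or_ne x 0 with rfl | hx0
  · simpa using hC 0 hx
  have hxn : 0 < ‖x‖ := norm_pos_iff.mpr hx0
  have hu : ‖x‖⁻¹ • x ∈ W := hW _ (inv_pos.mpr hxn) x hx
  have hu1 : ‖‖x‖⁻¹ • x‖ = 1 := by
    rw [norm_smul, norm_inv, norm_norm, inv_mul_cancel₀ hxn.ne']
  have hbdd : BddAbove ((fun x => ‖f x‖) '' {x ∈ W | ‖x‖ = 1}) :=
    ⟨C, by rintro _ ⟨y, ⟨hy, hy1⟩, rfl⟩; simpa [hy1] using hC y hy⟩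
  have hfu : ‖f (‖x‖⁻¹ • x)‖ ≤ opNormW f W := le_csSup hbdd ⟨_, ⟨hu, hu1⟩, rfl⟩
  calc ‖f x‖ = ‖‖x‖ • f (‖x‖⁻¹ • x)‖ := by rw [← hf.1.2 _ hxn _ hu, smul_inv_smul₀ hxn.ne']
    _ = ‖x‖ * ‖f (‖x‖⁻¹ • x)‖ := by rw [norm_smul, norm_norm]
    _ ≤ opNormW f W * ‖x‖ := by rw [mul_comm]; gcongr

lemma norm_comp_le_opNormW_mul (hW : ∀ c : ℝ, 0 < c → ∀ x ∈ W, c • x ∈ W)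
    (hf : HomogBoundedOn f W) (hg : HomogBoundedOn g W) {x : X} (hx : x ∈ W) :
    ‖f (g x)‖ ≤ opNormW f W * opNormW g W * ‖x‖ :=
  calc ‖f (g x)‖ ≤ opNormW f W * ‖g x‖ := norm_le_opNormW_mul hW hf (hg.1.1 hx)
    _ ≤ opNormW f W * (opNormW g W * ‖x‖) :=
      mul_le_mul_of_nonneg_left (norm_le_opNormW_mul hW hg hx) (opNormW_nonneg f W)
    _ = opNormW f W * opNormW g W * ‖x‖ := (mul_assoc ..).symm

lemma homogBoundedOn_id : HomogBoundedOn (id : X → X) W :=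
  ⟨⟨mapsTo_id W, fun _ _ _ _ => rfl⟩, ⟨1, fun x _ => by simp⟩⟩

lemma HomogBoundedOn.comp (hW : ∀ c : ℝ, 0 < c → ∀ x ∈ W, c • x ∈ W)
    (hf : HomogBoundedOn f W) (hg : HomogBoundedOn g W) : HomogBoundedOn (f ∘ g) W :=
  ⟨⟨hf.1.1.comp hg.1.1, fun c hc x hx => by
      simp only [Function.comp_apply, hg.1.2 c hc x hx, hf.1.2 c hc _ (hg.1.1 hx)]⟩,
    ⟨_, fun _ hx => norm_comp_le_opNormW_mul hW hf hg hx⟩⟩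

lemma opNormW_comp_le (hW : ∀ c : ℝ, 0 < c → ∀ x ∈ W, c • x ∈ W)
    (hf : HomogBoundedOn f W) (hg : HomogBoundedOn g W) :
    opNormW (f ∘ g) W ≤ opNormW f W * opNormW g W :=
  opNormW_le (mul_nonneg (opNormW_nonneg f W) (opNormW_nonneg g W)) fun _ hx hx1 => by
    simpa [hx1] using norm_comp_le_opNormW_mul hW hf hg hx

lemma HomogBoundedOn.iterate (hW : ∀ c : ℝ, 0 < c → ∀ x ∈ W, c • x ∈ W)
    (hg : HomogBoundedOn g W) (k : ℕ) : HomogBoundedOn g^[k] W := by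
  induction k with
  | zero => exact homogBoundedOn_id
  | succ k ih => rw [Function.iterate_succ]; exact ih.comp hW hg

lemma opNormW_iterate_le (hW : ∀ c : ℝ, 0 < c → ∀ x ∈ W, c • x ∈ W)
    (hg : HomogBoundedOn g W) (k : ℕ) : opNormW g^[k] W ≤ opNormW g W ^ k := by
  induction k with
  | zero => exact opNormW_id_le
  | succ k ih =>
    rw [Function.iterate_succ, pow_succ]
    exact (opNormW_comp_le hW (hg.iterate hW k) hg).trans <|
      mul_le_mul_of_nonneg_right ih (opNormW_nonneg g W)

lemma homogBoundedOn_seqComp (hW : ∀ c : ℝ, 0 < c → ∀ x ∈ W, c • x ∈ W) {d : ℕ → X → X}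
    (hd : ∀ i, HomogBoundedOn (d i) W) (n : ℕ) : HomogBoundedOn (seqComp d n) W := by
  induction n with
  | zero => exact homogBoundedOn_id
  | succ n ih => exact (hd n).comp hW ih

theorem tendsto_opNormW_seqComp_mod (hW : ∀ c : ℝ, 0 < c → ∀ x ∈ W, c • x ∈ W)
    {d : ℕ → X → X} (hd : ∀ i, HomogBoundedOn (d i) W) {m : ℕ} (hm : 0 < m)
    (hq : opNormW (seqComp d m) W < 1) :
    Tendsto (fun n => opNormW (seqComp (fun i => d (i % m)) n) W) atTop (𝓝 0) := by
  set q := opNormW (seqComp d m) W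
  set M := ∑ j ∈ Finset.range m, opNormW (seqComp d j) W
  have hbound (n : ℕ) : opNormW (seqComp (fun i => d (i % m)) n) W ≤ M * q ^ (n / m) := by
    have hj : n % m < m := Nat.mod_lt n hm
    have hM : opNormW (seqComp d (n % m)) W ≤ M :=
      Finset.single_le_sum (fun j _ => opNormW_nonneg _ W) (Finset.mem_range.mpr hj)
    rw [← Nat.div_add_mod n m, seqComp_mod_mul_add d _ hj.le, seqComp_mod_mul,
      Nat.mul_add_div hm, Nat.div_eq_of_lt hj, add_zero]
    calc _ ≤ opNormW (seqComp d (n % m)) W * opNormW (seqComp d m)^[n / m] W :=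
          opNormW_comp_le hW (homogBoundedOn_seqComp hW hd _)
            ((homogBoundedOn_seqComp hW hd m).iterate hW _)
      _ ≤ M * q ^ (n / m) :=
          mul_le_mul hM (opNormW_iterate_le hW (homogBoundedOn_seqComp hW hd m) _)
            (opNormW_nonneg _ W) (hM.trans' (opNormW_nonneg _ W))
  have hlim : Tendsto (fun n => M * q ^ (n / m)) atTop (𝓝 0) := by
    simpa using ((tendsto_pow_atTop_nhds_zero_of_lt_one (opNormW_nonneg _ W) hq).comp
      (Nat.tendsto_div_const_atTop hm.ne')).const_mul M
  exact squeeze_zero (fun n => opNormW_nonneg _ W) hbound hlim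

end

theorem statement19_general {X : Type*} [NormedAddCommGroup X] [NormedSpace ℝ X]
    (W : Set X) (hW : IsWedge W)
    (A : Set (X → X)) (hAne : A.Nonempty)
    (hA : ∀ f ∈ A, HomogOn f W ∧ BoundedMapOn f W) :
    (∃ d : ℕ → X → X, (∀ i, d i ∈ A) ∧
        Tendsto (fun m : ℕ => opNormW (seqComp d m) W) atTop (𝓝 0)) ↔
      (⨅ m : ℕ+, (subBeta A W (m : ℕ)) ^ (((m : ℕ) : ℝ)⁻¹)) < 1 := by
  rw [iInf_rpow_inv_lt_one_iff fun m => subBeta_nonneg m]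
  constructor
  · rintro ⟨d, hdA, hd⟩
    obtain ⟨N, hN⟩ := (hd.eventually_lt_const one_pos).exists_forall_of_atTop
    exact ⟨N.succPNat, (subBeta_le_opNormW (seqComp_mem_famPow hdA _)).trans_lt
      (hN _ N.le_succ)⟩
  · rintro ⟨m, hm⟩
    obtain ⟨g, hg, hg1⟩ := exists_opNormW_lt_of_subBeta_lt hAne hm
    obtain ⟨d, hdA, rfl⟩ := exists_seqComp_eq_of_mem_famPow hAne hg
    exact ⟨fun i => d (i % m), fun i => hdA _,
      tendsto_opNormW_seqComp_mod hW.2 (fun i => hA _ (hdA i)) m.pos hg1⟩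

theorem statement19 {X : Type*} [NormedAddCommGroup X] [NormedSpace ℝ X]
    (W : Set X) (hW : IsWedge W) (hW0 : ∃ x ∈ W, x ≠ 0)
    (A : Set (X → X)) (hAne : A.Nonempty)
    (hA : ∀ f ∈ A, HomogOn f W ∧ BoundedMapOn f W) :
    (∃ d : ℕ → X → X, (∀ i, d i ∈ A) ∧
        Tendsto (fun m : ℕ => opNormW (seqComp d m) W) atTop (𝓝 0)) ↔
      (⨅ m : ℕ+, (subBeta A W (m : ℕ)) ^ (((m : ℕ) : ℝ)⁻¹)) < 1 :=
  statement19_general W hW A hAne hA
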